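/- Let A be a p×r real matrix with orthonormal columns (AᵀA = I_r), B a p×m real matrix with ‖B‖ ≤ 1, and P an m×r real matrix. Let S denote the positive definite square root of I_r + PᵀP. Then the matrix Â := (A + B·P)·S⁻¹ satisfies ‖Â − A‖ ≤ 2·‖P‖. -/

import Mathlib

open Matrix

/-- Spectral norm (operator 2-norm) of a real matrix. -/
noncomputable def spec {m n : ℕ} (M : Matrix (Fin m) (Fin n) ℝ) : ℝ :=
  ‖(LinearMap.toContinuousLinearMap
      (Matrix.toEuclideanLin M : EuclideanSpace ℝ (Fin n) →ₗ[ℝ] EuclideanSpace ℝ (Fin m)))‖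

/-- Smallest singular value: infimum of ‖M·u‖ over unit vectors u. -/
noncomputable def sigmaMin {m n : ℕ} (M : Matrix (Fin m) (Fin n) ℝ) : ℝ :=
  ⨅ u : {u : EuclideanSpace ℝ (Fin n) // ‖u‖ = 1},
    ‖((WithLp.equiv 2 (Fin m → ℝ)).symm (M.mulVec ((WithLp.equiv 2 (Fin n → ℝ)) u.1)))‖

/-- Smallest eigenvalue of a symmetric matrix: infimum of ⟨x, S·x⟩ over unit vectors x. -/
noncomputable def lambdaMin {n : ℕ} (S : Matrix (Fin n) (Fin n) ℝ) : ℝ :=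
  ⨅ x : {x : EuclideanSpace ℝ (Fin n) // ‖x‖ = 1},
    ((WithLp.equiv 2 (Fin n → ℝ)) x.1) ⬝ᵥ S.mulVec ((WithLp.equiv 2 (Fin n → ℝ)) x.1)

/-!
Split `Â - A = A (S⁻¹ - 1) + B (P S⁻¹)`; each term has norm at most `‖P‖`. All estimates
come from one comparison principle: if `Mᴴ M ≤ Nᴴ N` in the Loewner order and `N` is invertible,
then `‖M N⁻¹‖ ≤ 1`. It gives `‖A‖ ≤ 1` (from `Aᴴ A = 1`), `‖S⁻¹‖ ≤ 1` (from `1 ≤ S²`) and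
`‖P (S + 1)⁻¹‖ ≤ 1` (from `Pᴴ P ≤ (S + 1)²`). Factoring `S² - 1 = Pᴴ P` as
`S - 1 = Pᴴ · P (S + 1)⁻¹` then yields `‖S⁻¹ - 1‖ = ‖S⁻¹ (S - 1)‖ ≤ ‖P‖`.
-/

open scoped Matrix.Norms.L2Operator MatrixOrder ComplexOrder InnerProductSpace

namespace Matrix

variable {𝕜 l m n : Type*} [RCLike 𝕜] [Fintype l] [Fintype m] [Fintype n] [DecidableEq n]

theorem norm_toEuclideanLin_sq (M : Matrix m n 𝕜) (x : EuclideanSpace 𝕜 n) :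
    ‖toEuclideanLin M x‖ ^ 2 = RCLike.re ⟪toEuclideanLin (Mᴴ * M) x, x⟫_𝕜 := by
  classical
  rw [toLpLin_mul_same, LinearMap.comp_apply, toEuclideanLin_conjTranspose_eq_adjoint,
    LinearMap.adjoint_inner_left, norm_sq_eq_re_inner (𝕜 := 𝕜)]

theorem norm_toEuclideanLin_le_of_le {M : Matrix m n 𝕜} {N : Matrix l n 𝕜}
    (h : Mᴴ * M ≤ Nᴴ * N) (x : EuclideanSpace 𝕜 n) :
    ‖toEuclideanLin M x‖ ≤ ‖toEuclideanLin N x‖ := by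
  have hpos := (isPositive_toEuclideanLin_iff.2 (le_iff.1 h)).re_inner_nonneg_left x
  rw [map_sub, LinearMap.sub_apply, inner_sub_left, map_sub, sub_nonneg,
    ← norm_toEuclideanLin_sq, ← norm_toEuclideanLin_sq] at hpos
  exact pow_le_pow_iff_left₀ (norm_nonneg _) (norm_nonneg _) two_ne_zero |>.1 hpos

theorem l2_opNorm_mul_inv_le_one_of_le {M : Matrix m n 𝕜} {N : Matrix n n 𝕜}
    (hN : IsUnit N) (h : Mᴴ * M ≤ Nᴴ * N) : ‖M * N⁻¹‖ ≤ 1 := by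
  rw [l2_opNorm_def]
  refine ContinuousLinearMap.opNorm_le_bound _ zero_le_one fun x => ?_
  have hx := norm_toEuclideanLin_le_of_le h (toEuclideanLin N⁻¹ x)
  rw [← LinearMap.comp_apply, ← LinearMap.comp_apply, ← toLpLin_mul_same, ← toLpLin_mul_same,
    mul_nonsing_inv _ ((isUnit_iff_isUnit_det N).1 hN), toLpLin_one, LinearMap.id_apply] at hx
  simpa using hx

namespace PosDef

variable {S : Matrix n n 𝕜} {P : Matrix m n 𝕜} (hS : S.PosDef) (hS2 : S * S = 1 + Pᴴ * P)
include hS hS2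

theorem l2_opNorm_inv_le_one : ‖S⁻¹‖ ≤ 1 := by
  have h : (1 : Matrix n n 𝕜)ᴴ * 1 ≤ Sᴴ * S := by
    rw [hS.isHermitian.eq, hS2, conjTranspose_one, Matrix.mul_one]
    exact le_add_of_nonneg_right (nonneg_iff_posSemidef.2 (posSemidef_conjTranspose_mul_self P))
  simpa using l2_opNorm_mul_inv_le_one_of_le hS.isUnit h

theorem l2_opNorm_mul_add_one_inv_le_one : ‖P * (S + 1)⁻¹‖ ≤ 1 := by
  have hS1 : (S + 1).PosDef := hS.add PosDef.one
  have h : Pᴴ * P ≤ (S + 1)ᴴ * (S + 1) := by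
    have hexp : (S + 1)ᴴ * (S + 1) = Pᴴ * P + ((S + 1) + (S + 1)) := by
      rw [conjTranspose_add, hS.isHermitian.eq, conjTranspose_one, Matrix.add_mul,
        Matrix.mul_add, Matrix.mul_one, Matrix.one_mul, hS2]
      abel
    rw [hexp]
    exact le_add_of_nonneg_right (nonneg_iff_posSemidef.2 (hS1.add hS1).posSemidef)
  exact l2_opNorm_mul_inv_le_one_of_le hS1.isUnit h

theorem l2_opNorm_inv_sub_one_le : ‖S⁻¹ - 1‖ ≤ ‖P‖ := by
  classical
  have hfactor : S - 1 = Pᴴ * (P * (S + 1)⁻¹) := by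
    have hsq : (S - 1) * (S + 1) = Pᴴ * P := by
      rw [Matrix.sub_mul, Matrix.mul_add, Matrix.mul_add, hS2]
      simp only [Matrix.mul_one, Matrix.one_mul]
      abel
    rw [← Matrix.mul_assoc, ← hsq, Matrix.mul_assoc,
      mul_nonsing_inv _ ((isUnit_iff_isUnit_det _).1 (hS.add PosDef.one).isUnit), Matrix.mul_one]
  have hinv : S⁻¹ - 1 = -(S⁻¹ * (S - 1)) := by
    rw [Matrix.mul_sub, Matrix.mul_one, nonsing_inv_mul _ ((isUnit_iff_isUnit_det _).1 hS.isUnit)]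
    abel
  calc ‖S⁻¹ - 1‖ = ‖S⁻¹ * (Pᴴ * (P * (S + 1)⁻¹))‖ := by rw [hinv, norm_neg, hfactor]
    _ ≤ ‖S⁻¹‖ * (‖Pᴴ‖ * ‖P * (S + 1)⁻¹‖) :=
        (l2_opNorm_mul _ _).trans (by gcongr; exact l2_opNorm_mul _ _)
    _ ≤ 1 * (‖P‖ * 1) := by
        rw [l2_opNorm_conjTranspose]
        gcongr
        exacts [hS.l2_opNorm_inv_le_one hS2, hS.l2_opNorm_mul_add_one_inv_le_one hS2]
    _ = ‖P‖ := by ring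

end PosDef

end Matrix

/-- if A is p×r with orthonormal columns, B is p×m with ‖B‖ ≤ 1, P is m×r,
and S is the positive definite square root of I_r + PᵀP, then
Â := (A + B·P)·S⁻¹ satisfies ‖Â − A‖ ≤ 2·‖P‖. -/
theorem perturb_orthonormal_norm_le {p r m : ℕ}
    (A : Matrix (Fin p) (Fin r) ℝ) (hA : Aᵀ * A = 1)
    (B : Matrix (Fin p) (Fin m) ℝ) (hB : spec B ≤ 1)
    (P : Matrix (Fin m) (Fin r) ℝ)
    (S : Matrix (Fin r) (Fin r) ℝ) (hS : S.PosDef) (hS2 : S * S = 1 + Pᵀ * P) :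
    spec ((A + B * P) * S⁻¹ - A) ≤ 2 * spec P := by
  rw [← conjTranspose_eq_transpose_of_trivial] at hA hS2
  have hA1 : ‖A‖ ≤ 1 := by
    simpa using l2_opNorm_mul_inv_le_one_of_le isUnit_one (M := A)
      (by rw [conjTranspose_one, Matrix.mul_one, hA])
  have hdecomp : (A + B * P) * S⁻¹ - A = A * (S⁻¹ - 1) + B * (P * S⁻¹) := by
    rw [Matrix.add_mul, Matrix.mul_sub, Matrix.mul_one, Matrix.mul_assoc]
    abel
  -- `spec` is definitionally the norm of the scoped instance `Matrix.Norms.L2Operator`.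
  change ‖(A + B * P) * S⁻¹ - A‖ ≤ 2 * ‖P‖
  calc ‖(A + B * P) * S⁻¹ - A‖ ≤ ‖A‖ * ‖S⁻¹ - 1‖ + ‖B‖ * (‖P‖ * ‖S⁻¹‖) := by
        rw [hdecomp]
        exact (norm_add_le _ _).trans (add_le_add (l2_opNorm_mul _ _)
          ((l2_opNorm_mul _ _).trans (by gcongr; exact l2_opNorm_mul _ _)))
    _ ≤ 1 * ‖P‖ + 1 * (‖P‖ * 1) := by
        gcongr
        exacts [hS.l2_opNorm_inv_sub_one_le hS2, hB, hS.l2_opNorm_inv_le_one hS2]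
    _ = 2 * ‖P‖ := by ring
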